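/- Let n,m ≥ 1 and u : {0,1}ⁿ × {0,1}ᵐ → ℝ, and let (x,y) be a weak pure Nash equilibrium corner: u(x,y) ≥ u(x̄ⁱ,y) for all i, u(x,y) ≤ u(x,ȳʲ) for all j, with equality for at least one index. Let I₀ (resp. J₀) be the set of i (resp. j) achieving equality, and for a state (p,q) define γ_max = max{maxᵢ p_{i,x̄ᵢ}, maxⱼ q_{j,ȳⱼ}} and γ₀ = max{max_{i∈I₀} p_{i,x̄ᵢ}, max_{j∈J₀} q_{j,ȳⱼ}}. Then there exists γ ∈ (0,1/2) such that for every solution (p(t),q(t)) of the Red Queen dynamics defined for all t ≥ 0 with values in (0,1)^{n+m} and every time t₀ at which the state is γ-near (x,y) and γ_max(t₀) > γ₀(t₀), there is a finite time t > t₀ at which either the state is γ-far from (x,y) or γ_max(t) = γ₀(t). -/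

import Mathlib

open MeasureTheory

noncomputable section

/-- `p_{i,b}`: the probability that gene `i` takes allele `b`
(`b = false ↦ pᵢ`, `b = true ↦ 1 − pᵢ`). -/
def coord {n : ℕ} (p : Fin n → ℝ) (i : Fin n) (b : Bool) : ℝ :=
  if b then 1 - p i else p i

/-- `x` with its `i`-th bit flipped. -/
def bflip {n : ℕ} (x : Fin n → Bool) (i : Fin n) : Fin n → Bool :=
  Function.update x i (!x i)

/-- `K_{A,i}(x,y,p,q) = Π_{i'≠i} p_{i',x_{i'}} Π_j q_{j,y_j}`. -/
def KA {n m : ℕ} (p : Fin n → ℝ) (q : Fin m → ℝ) (i : Fin n)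
    (x : Fin n → Bool) (y : Fin m → Bool) : ℝ :=
  (∏ i' ∈ Finset.univ.erase i, coord p i' (x i')) * ∏ j, coord q j (y j)

/-- `K_{B,j}(x,y,p,q) = Π_i p_{i,x_i} Π_{j'≠j} q_{j',y_{j'}}`. -/
def KB {n m : ℕ} (p : Fin n → ℝ) (q : Fin m → ℝ) (j : Fin m)
    (x : Fin n → Bool) (y : Fin m → Bool) : ℝ :=
  (∏ i, coord p i (x i)) * ∏ j' ∈ Finset.univ.erase j, coord q j' (y j')

/-- The average payoff `û(p,q) = Σ_{x,y} P(x,y) u(x,y)` where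
`P(x,y) = Π_i p_{i,x_i} Π_j q_{j,y_j}`. -/
def uhat {n m : ℕ} (u : (Fin n → Bool) → (Fin m → Bool) → ℝ)
    (p : Fin n → ℝ) (q : Fin m → ℝ) : ℝ :=
  ∑ x : Fin n → Bool, ∑ y : Fin m → Bool,
    ((∏ i, coord p i (x i)) * ∏ j, coord q j (y j)) * u x y

/-- The average payoff conditioned on `xᵢ = b`:
`û_{i,b}(p,q) = Σ_{x : x_i = b} Σ_y K_{A,i}(x,y,p,q) u(x,y)`. -/
def uhatA {n m : ℕ} (u : (Fin n → Bool) → (Fin m → Bool) → ℝ)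
    (p : Fin n → ℝ) (q : Fin m → ℝ) (i : Fin n) (b : Bool) : ℝ :=
  ∑ x : Fin n → Bool, ∑ y : Fin m → Bool,
    if x i = b then KA p q i x y * u x y else 0

/-- The average payoff conditioned on `yⱼ = b`:
`û_{j,b}(p,q) = Σ_x Σ_{y : y_j = b} K_{B,j}(x,y,p,q) u(x,y)`. -/
def uhatB {n m : ℕ} (u : (Fin n → Bool) → (Fin m → Bool) → ℝ)
    (p : Fin n → ℝ) (q : Fin m → ℝ) (j : Fin m) (b : Bool) : ℝ :=
  ∑ x : Fin n → Bool, ∑ y : Fin m → Bool,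
    if y j = b then KB p q j x y * u x y else 0

/-- `(p,q)` is a solution of the Red Queen dynamics
`ṗᵢ = pᵢ(û_{i,0}(p,q) − û(p,q))`, `q̇ⱼ = −qⱼ(û_{j,0}(p,q) − û(p,q))`
for all times `t ≥ 0`. -/
def RQSolution {n m : ℕ} (u : (Fin n → Bool) → (Fin m → Bool) → ℝ)
    (p : ℝ → Fin n → ℝ) (q : ℝ → Fin m → ℝ) : Prop :=
  (∀ t, 0 ≤ t → ∀ i, HasDerivAt (fun s => p s i)
      (p t i * (uhatA u (p t) (q t) i false - uhat u (p t) (q t))) t) ∧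
  (∀ t, 0 ≤ t → ∀ j, HasDerivAt (fun s => q s j)
      (-(q t j * (uhatB u (p t) (q t) j false - uhat u (p t) (q t)))) t)

/-- `(p,q)` takes values in the open cube `(0,1)^{n+m}` at all times `t ≥ 0`. -/
def InteriorValues {n m : ℕ} (p : ℝ → Fin n → ℝ) (q : ℝ → Fin m → ℝ) : Prop :=
  ∀ t, 0 ≤ t → (∀ i, p t i ∈ Set.Ioo (0:ℝ) 1) ∧ (∀ j, q t j ∈ Set.Ioo (0:ℝ) 1)

/-- Binary Shannon entropy. -/
def binEnt (s : ℝ) : ℝ := -(s * Real.log s) - (1 - s) * Real.log (1 - s)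

/-- The entropy `H(p) = Σᵢ h(pᵢ)` of a population. -/
def ent {n : ℕ} (p : Fin n → ℝ) : ℝ := ∑ i, binEnt (p i)

/-- The state `(p,q)` is `γ`-near the corner `(x,y)`:
`p_{i,xᵢ} > 1 − γ` for all `i` and `q_{j,yⱼ} > 1 − γ` for all `j`. -/
def Near {n m : ℕ} (γ : ℝ) (x : Fin n → Bool) (y : Fin m → Bool)
    (p : Fin n → ℝ) (q : Fin m → ℝ) : Prop :=
  (∀ i, 1 - γ < coord p i (x i)) ∧ (∀ j, 1 - γ < coord q j (y j))

/-- The indices (players of team A or team B) that are indifferent to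
defecting at the corner `(x,y)`: `I₀ ⊕ J₀`. -/
def eqIdx {n m : ℕ} (u : (Fin n → Bool) → (Fin m → Bool) → ℝ)
    (x : Fin n → Bool) (y : Fin m → Bool) : Fin n ⊕ Fin m → Prop :=
  Sum.elim (fun i => u x y = u (bflip x i) y) (fun j => u x y = u x (bflip y j))

/-- The value `p_{i,x̄ᵢ}` (resp. `q_{j,ȳⱼ}`) attached to an index: the mass on
the allele opposite to the corner `(x,y)`. Maximising it over all indices
gives `γ_max`, and over the indifferent indices gives `γ₀`. -/
def oppMass {n m : ℕ} (x : Fin n → Bool) (y : Fin m → Bool)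
    (p : Fin n → ℝ) (q : Fin m → ℝ) : Fin n ⊕ Fin m → ℝ :=
  Sum.elim (fun i => coord p i (!(x i))) (fun j => coord q j (!(y j)))

lemma coord_pos {n : ℕ} {p : Fin n → ℝ} (hp : ∀ i, p i ∈ Set.Ioo (0:ℝ) 1)
    (i : Fin n) (b : Bool) : 0 < coord p i b := by
  cases b <;> simp [coord]
  · exact (hp i).1
  · linarith [(hp i).2]

lemma coord_lt_one {n : ℕ} {p : Fin n → ℝ} (hp : ∀ i, p i ∈ Set.Ioo (0:ℝ) 1)
    (i : Fin n) (b : Bool) : coord p i b < 1 := by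
  cases b <;> simp [coord]
  · exact (hp i).2
  · linarith [(hp i).1]

lemma coord_not {n : ℕ} (p : Fin n → ℝ) (i : Fin n) (b : Bool) :
    coord p i (!b) = 1 - coord p i b := by
  cases b <;> simp [coord]

lemma sum_coord_bool {n : ℕ} (p : Fin n → ℝ) (i : Fin n) :
    (∑ b : Bool, coord p i b) = 1 := by
  simp [Fintype.sum_bool, coord]

lemma sum_prod_coord {n : ℕ} (p : Fin n → ℝ) :
    ∑ z : Fin n → Bool, ∏ i, coord p i (z i) = 1 := by
  classical
  rw [← Fintype.piFinset_univ,
    ← Finset.prod_univ_sum (fun _ => (Finset.univ : Finset Bool)) (fun i b => coord p i b)]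
  exact Finset.prod_eq_one (fun i _ => sum_coord_bool p i)

lemma sum_ite_prod_erase {n : ℕ} (p : Fin n → ℝ) (i : Fin n) (b : Bool) :
    ∑ z : Fin n → Bool,
      (if z i = b then ∏ i' ∈ Finset.univ.erase i, coord p i' (z i') else 0) = 1 := by
  classical
  set g : Fin n → Bool → ℝ :=
    fun i' b' => if i' = i then (if b' = b then 1 else 0) else coord p i' b' with hg
  have h1 : ∀ z : Fin n → Bool,
      (if z i = b then ∏ i' ∈ Finset.univ.erase i, coord p i' (z i') else 0)
        = ∏ i', g i' (z i') := by
    intro z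
    rw [← Finset.mul_prod_erase Finset.univ (fun i' => g i' (z i')) (Finset.mem_univ i)]
    have h2 : ∏ i' ∈ Finset.univ.erase i, g i' (z i')
        = ∏ i' ∈ Finset.univ.erase i, coord p i' (z i') :=
      Finset.prod_congr rfl (fun j hj => by simp [hg, Finset.ne_of_mem_erase hj])
    rw [h2]
    by_cases hzb : z i = b
    · simp [hg, hzb]
    · simp [hg, hzb]
  rw [Finset.sum_congr rfl (fun z _ => h1 z), ← Fintype.piFinset_univ,
    ← Finset.prod_univ_sum (fun _ => (Finset.univ : Finset Bool)) g]
  apply Finset.prod_eq_one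
  intro i' _
  by_cases h : i' = i
  · subst h; cases b <;> simp [hg, Fintype.sum_bool]
  · simp [hg, h, Fintype.sum_bool, coord]

lemma uhat_decompA {n m : ℕ} (u : (Fin n → Bool) → (Fin m → Bool) → ℝ)
    (p : Fin n → ℝ) (q : Fin m → ℝ) (i : Fin n) :
    uhat u p q = p i * uhatA u p q i false + (1 - p i) * uhatA u p q i true := by
  classical
  unfold uhat uhatA KA
  rw [Finset.mul_sum, Finset.mul_sum, ← Finset.sum_add_distrib]
  refine Finset.sum_congr rfl (fun z _ => ?_)
  rw [Finset.mul_sum, Finset.mul_sum, ← Finset.sum_add_distrib]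
  refine Finset.sum_congr rfl (fun w _ => ?_)
  rw [← Finset.mul_prod_erase Finset.univ (fun i' => coord p i' (z i')) (Finset.mem_univ i)]
  cases hb : z i <;> simp [coord, hb] <;> ring

lemma uhat_decompB {n m : ℕ} (u : (Fin n → Bool) → (Fin m → Bool) → ℝ)
    (p : Fin n → ℝ) (q : Fin m → ℝ) (j : Fin m) :
    uhat u p q = q j * uhatB u p q j false + (1 - q j) * uhatB u p q j true := by
  classical
  unfold uhat uhatB KB
  rw [Finset.mul_sum, Finset.mul_sum, ← Finset.sum_add_distrib]
  refine Finset.sum_congr rfl (fun z _ => ?_)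
  rw [Finset.mul_sum, Finset.mul_sum, ← Finset.sum_add_distrib]
  refine Finset.sum_congr rfl (fun w _ => ?_)
  rw [← Finset.mul_prod_erase Finset.univ (fun j' => coord q j' (w j')) (Finset.mem_univ j)]
  cases hb : w j <;> simp [coord, hb] <;> ring

lemma uhatA_close {n m : ℕ} (u : (Fin n → Bool) → (Fin m → Bool) → ℝ)
    (x : Fin n → Bool) (y : Fin m → Bool)
    {p : Fin n → ℝ} {q : Fin m → ℝ}
    (hp : ∀ i, p i ∈ Set.Ioo (0:ℝ) 1) (hq : ∀ j, q j ∈ Set.Ioo (0:ℝ) 1)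
    {γ : ℝ} (hγ0 : 0 < γ) (hγ1 : γ < 1) (hN : Near γ x y p q)
    {M : ℝ} (hM : ∀ x' y', |u x' y'| ≤ M)
    (i : Fin n) (b : Bool) :
    |uhatA u p q i b - u (Function.update x i b) y| ≤ 2 * M * (1 - (1-γ)^(n+m)) := by
  classical
  have hM0 : 0 ≤ M := le_trans (abs_nonneg _) (hM x y)
  set T : ℝ := u (Function.update x i b) y with hT
  -- the weights sum to one
  have hqsum : ∑ w : Fin m → Bool, ∏ j, coord q j (w j) = 1 := sum_prod_coord q
  set G : (Fin n → Bool) × (Fin m → Bool) → ℝ :=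
    fun z => if z.1 i = b then KA p q i z.1 z.2 else 0 with hG
  have hsum : ∑ z ∈ Finset.univ ×ˢ Finset.univ, G z = 1 := by
    rw [Finset.sum_product]
    have : ∀ z : Fin n → Bool, ∑ w : Fin m → Bool, G (z, w)
        = (if z i = b then ∏ i' ∈ Finset.univ.erase i, coord p i' (z i') else 0) := by
      intro z
      by_cases h : z i = b
      · simp only [hG, KA, h, if_true]
        rw [← Finset.mul_sum, hqsum, mul_one]
      · simp [hG, h]
    rw [Finset.sum_congr rfl (fun z _ => this z)]
    exact sum_ite_prod_erase p i b
  have hKA_nonneg : ∀ z w, 0 ≤ KA p q i z w := by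
    intro z w
    unfold KA
    exact mul_nonneg (Finset.prod_nonneg fun _ _ => (coord_pos hp _ _).le)
      (Finset.prod_nonneg fun _ _ => (coord_pos hq _ _).le)
  have hG_nonneg : ∀ z, 0 ≤ G z := by
    intro z; by_cases h : z.1 i = b <;> simp [hG, h, hKA_nonneg]
  -- the corner weight is large
  set z₀ : (Fin n → Bool) × (Fin m → Bool) := (Function.update x i b, y) with hz₀
  have hz₀1 : z₀.1 = Function.update x i b := rfl
  have hz₀2 : z₀.2 = y := rfl
  have hz₀i : z₀.1 i = b := Function.update_self i b x
  have h1γ : (0:ℝ) ≤ 1 - γ := by linarith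
  have hcorner : (1-γ)^(n+m) ≤ G z₀ := by
    have e1 : (1-γ)^((Finset.univ.erase i).card)
        ≤ ∏ i' ∈ Finset.univ.erase i, coord p i' (z₀.1 i') := by
      rw [← Finset.prod_const]
      refine Finset.prod_le_prod (fun _ _ => h1γ) (fun i' hi' => ?_)
      rw [hz₀1, Function.update_of_ne (Finset.ne_of_mem_erase hi')]
      exact (hN.1 i').le
    have e2 : (1-γ)^m ≤ ∏ j, coord q j (z₀.2 j) := by
      have h2 : ∏ _j : Fin m, (1-γ) ≤ ∏ j, coord q j (z₀.2 j) :=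
        Finset.prod_le_prod (fun _ _ => h1γ) (fun j _ => by rw [hz₀2]; exact (hN.2 j).le)
      simpa using h2
    have e3 : (1-γ)^(n+m) ≤ (1-γ)^((Finset.univ.erase i).card + m) := by
      apply pow_le_pow_of_le_one h1γ (by linarith)
      have : (Finset.univ.erase i).card = n - 1 := by
        rw [Finset.card_erase_of_mem (Finset.mem_univ i)]
        simp
      omega
    simp only [hG, if_pos hz₀i, KA]
    calc (1-γ)^(n+m) ≤ (1-γ)^((Finset.univ.erase i).card + m) := e3
      _ = (1-γ)^((Finset.univ.erase i).card) * (1-γ)^m := pow_add _ _ _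
      _ ≤ _ := mul_le_mul e1 e2 (pow_nonneg h1γ _)
            (Finset.prod_nonneg fun _ _ => (coord_pos hp _ _).le)
  -- rewrite the difference
  set F : (Fin n → Bool) × (Fin m → Bool) → ℝ :=
    fun z => if z.1 i = b then KA p q i z.1 z.2 * (u z.1 z.2 - T) else 0 with hF
  have ediff : uhatA u p q i b - T = ∑ z ∈ Finset.univ ×ˢ Finset.univ, F z := by
    set H : (Fin n → Bool) × (Fin m → Bool) → ℝ :=
      fun z => if z.1 i = b then KA p q i z.1 z.2 * u z.1 z.2 else 0 with hH
    have e0 : ∑ z ∈ Finset.univ ×ˢ Finset.univ, H z = uhatA u p q i b := by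
      rw [Finset.sum_product]; rfl
    rw [← e0]
    have : T = T * ∑ z ∈ Finset.univ ×ˢ Finset.univ, G z := by rw [hsum, mul_one]
    rw [this, Finset.mul_sum, ← Finset.sum_sub_distrib]
    refine Finset.sum_congr rfl (fun z _ => ?_)
    by_cases h : z.1 i = b <;> simp [hF, hG, hH, h] <;> ring
  have hz₀mem : z₀ ∈ Finset.univ ×ˢ Finset.univ := by simp
  have hFz₀ : F z₀ = 0 := by simp [hF, hz₀i, hz₀, hT]
  have hFb : ∀ z, |F z| ≤ 2 * M * G z := by
    intro z
    by_cases h : z.1 i = b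
    · simp only [hF, hG, if_pos h]
      rw [abs_mul, abs_of_nonneg (hKA_nonneg _ _)]
      have : |u z.1 z.2 - T| ≤ 2 * M := by
        calc |u z.1 z.2 - T| ≤ |u z.1 z.2| + |T| := abs_sub _ _
          _ ≤ M + M := add_le_add (hM _ _) (hM _ _)
          _ = 2 * M := by ring
      calc KA p q i z.1 z.2 * |u z.1 z.2 - T| ≤ KA p q i z.1 z.2 * (2*M) :=
            mul_le_mul_of_nonneg_left this (hKA_nonneg _ _)
        _ = 2 * M * KA p q i z.1 z.2 := by ring
    · simp [hF, hG, h]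
  calc |uhatA u p q i b - T| = |∑ z ∈ Finset.univ ×ˢ Finset.univ, F z| := by rw [ediff]
    _ ≤ ∑ z ∈ Finset.univ ×ˢ Finset.univ, |F z| := Finset.abs_sum_le_sum_abs _ _
    _ = ∑ z ∈ (Finset.univ ×ˢ Finset.univ).erase z₀, |F z| := by
        rw [← Finset.add_sum_erase _ _ hz₀mem, hFz₀, abs_zero, zero_add]
    _ ≤ ∑ z ∈ (Finset.univ ×ˢ Finset.univ).erase z₀, 2 * M * G z :=
        Finset.sum_le_sum (fun z _ => hFb z)
    _ = 2 * M * ∑ z ∈ (Finset.univ ×ˢ Finset.univ).erase z₀, G z := by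
        rw [Finset.mul_sum]
    _ ≤ 2 * M * (1 - (1-γ)^(n+m)) := by
        apply mul_le_mul_of_nonneg_left _ (by linarith : (0:ℝ) ≤ 2*M)
        have : ∑ z ∈ (Finset.univ ×ˢ Finset.univ).erase z₀, G z = 1 - G z₀ := by
          rw [← hsum, ← Finset.add_sum_erase _ _ hz₀mem]; ring
        rw [this]
        linarith

lemma uhatB_close {n m : ℕ} (u : (Fin n → Bool) → (Fin m → Bool) → ℝ)
    (x : Fin n → Bool) (y : Fin m → Bool)
    {p : Fin n → ℝ} {q : Fin m → ℝ}
    (hp : ∀ i, p i ∈ Set.Ioo (0:ℝ) 1) (hq : ∀ j, q j ∈ Set.Ioo (0:ℝ) 1)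
    {γ : ℝ} (hγ0 : 0 < γ) (hγ1 : γ < 1) (hN : Near γ x y p q)
    {M : ℝ} (hM : ∀ x' y', |u x' y'| ≤ M)
    (j : Fin m) (b : Bool) :
    |uhatB u p q j b - u x (Function.update y j b)| ≤ 2 * M * (1 - (1-γ)^(n+m)) := by
  classical
  have hM0 : 0 ≤ M := le_trans (abs_nonneg _) (hM x y)
  set T : ℝ := u x (Function.update y j b) with hT
  have hpsum : ∑ z : Fin n → Bool, ∏ i, coord p i (z i) = 1 := sum_prod_coord p
  set G : (Fin n → Bool) × (Fin m → Bool) → ℝ :=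
    fun z => if z.2 j = b then KB p q j z.1 z.2 else 0 with hG
  have hsum : ∑ z ∈ Finset.univ ×ˢ Finset.univ, G z = 1 := by
    rw [Finset.sum_product_right]
    have : ∀ w : Fin m → Bool, ∑ z : Fin n → Bool, G (z, w)
        = (if w j = b then ∏ j' ∈ Finset.univ.erase j, coord q j' (w j') else 0) := by
      intro w
      by_cases h : w j = b
      · simp only [hG, KB, h, if_true]
        rw [← Finset.sum_mul, hpsum, one_mul]
      · simp [hG, h]
    rw [Finset.sum_congr rfl (fun w _ => this w)]
    exact sum_ite_prod_erase q j b
  have hKB_nonneg : ∀ z w, 0 ≤ KB p q j z w := by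
    intro z w
    unfold KB
    exact mul_nonneg (Finset.prod_nonneg fun _ _ => (coord_pos hp _ _).le)
      (Finset.prod_nonneg fun _ _ => (coord_pos hq _ _).le)
  have hG_nonneg : ∀ z, 0 ≤ G z := by
    intro z; by_cases h : z.2 j = b <;> simp [hG, h, hKB_nonneg]
  set z₀ : (Fin n → Bool) × (Fin m → Bool) := (x, Function.update y j b) with hz₀
  have hz₀1 : z₀.1 = x := rfl
  have hz₀2 : z₀.2 = Function.update y j b := rfl
  have hz₀j : z₀.2 j = b := Function.update_self j b y
  have h1γ : (0:ℝ) ≤ 1 - γ := by linarith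
  have hcorner : (1-γ)^(n+m) ≤ G z₀ := by
    have e2 : (1-γ)^((Finset.univ.erase j).card)
        ≤ ∏ j' ∈ Finset.univ.erase j, coord q j' (z₀.2 j') := by
      rw [← Finset.prod_const]
      refine Finset.prod_le_prod (fun _ _ => h1γ) (fun j' hj' => ?_)
      rw [hz₀2, Function.update_of_ne (Finset.ne_of_mem_erase hj')]
      exact (hN.2 j').le
    have e1 : (1-γ)^n ≤ ∏ i, coord p i (z₀.1 i) := by
      have h2 : ∏ _i : Fin n, (1-γ) ≤ ∏ i, coord p i (z₀.1 i) :=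
        Finset.prod_le_prod (fun _ _ => h1γ) (fun i _ => by rw [hz₀1]; exact (hN.1 i).le)
      simpa using h2
    have e3 : (1-γ)^(n+m) ≤ (1-γ)^(n + (Finset.univ.erase j).card) := by
      apply pow_le_pow_of_le_one h1γ (by linarith)
      have : (Finset.univ.erase j).card = m - 1 := by
        rw [Finset.card_erase_of_mem (Finset.mem_univ j)]
        simp
      omega
    simp only [hG, if_pos hz₀j, KB]
    calc (1-γ)^(n+m) ≤ (1-γ)^(n + (Finset.univ.erase j).card) := e3
      _ = (1-γ)^n * (1-γ)^((Finset.univ.erase j).card) := pow_add _ _ _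
      _ ≤ _ := mul_le_mul e1 e2 (pow_nonneg h1γ _)
            (Finset.prod_nonneg fun _ _ => (coord_pos hp _ _).le)
  set F : (Fin n → Bool) × (Fin m → Bool) → ℝ :=
    fun z => if z.2 j = b then KB p q j z.1 z.2 * (u z.1 z.2 - T) else 0 with hF
  have ediff : uhatB u p q j b - T = ∑ z ∈ Finset.univ ×ˢ Finset.univ, F z := by
    set H : (Fin n → Bool) × (Fin m → Bool) → ℝ :=
      fun z => if z.2 j = b then KB p q j z.1 z.2 * u z.1 z.2 else 0 with hH
    have e0 : ∑ z ∈ Finset.univ ×ˢ Finset.univ, H z = uhatB u p q j b := by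
      rw [Finset.sum_product]; rfl
    rw [← e0]
    have : T = T * ∑ z ∈ Finset.univ ×ˢ Finset.univ, G z := by rw [hsum, mul_one]
    rw [this, Finset.mul_sum, ← Finset.sum_sub_distrib]
    refine Finset.sum_congr rfl (fun z _ => ?_)
    by_cases h : z.2 j = b <;> simp [hF, hG, hH, h] <;> ring
  have hz₀mem : z₀ ∈ Finset.univ ×ˢ Finset.univ := by simp
  have hFz₀ : F z₀ = 0 := by simp [hF, hz₀j, hz₀, hT]
  have hFb : ∀ z, |F z| ≤ 2 * M * G z := by
    intro z
    by_cases h : z.2 j = b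
    · simp only [hF, hG, if_pos h]
      rw [abs_mul, abs_of_nonneg (hKB_nonneg _ _)]
      have : |u z.1 z.2 - T| ≤ 2 * M := by
        calc |u z.1 z.2 - T| ≤ |u z.1 z.2| + |T| := abs_sub _ _
          _ ≤ M + M := add_le_add (hM _ _) (hM _ _)
          _ = 2 * M := by ring
      calc KB p q j z.1 z.2 * |u z.1 z.2 - T| ≤ KB p q j z.1 z.2 * (2*M) :=
            mul_le_mul_of_nonneg_left this (hKB_nonneg _ _)
        _ = 2 * M * KB p q j z.1 z.2 := by ring
    · simp [hF, hG, h]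
  calc |uhatB u p q j b - T| = |∑ z ∈ Finset.univ ×ˢ Finset.univ, F z| := by rw [ediff]
    _ ≤ ∑ z ∈ Finset.univ ×ˢ Finset.univ, |F z| := Finset.abs_sum_le_sum_abs _ _
    _ = ∑ z ∈ (Finset.univ ×ˢ Finset.univ).erase z₀, |F z| := by
        rw [← Finset.add_sum_erase _ _ hz₀mem, hFz₀, abs_zero, zero_add]
    _ ≤ ∑ z ∈ (Finset.univ ×ˢ Finset.univ).erase z₀, 2 * M * G z :=
        Finset.sum_le_sum (fun z _ => hFb z)
    _ = 2 * M * ∑ z ∈ (Finset.univ ×ˢ Finset.univ).erase z₀, G z := by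
        rw [Finset.mul_sum]
    _ ≤ 2 * M * (1 - (1-γ)^(n+m)) := by
        apply mul_le_mul_of_nonneg_left _ (by linarith : (0:ℝ) ≤ 2*M)
        have : ∑ z ∈ (Finset.univ ×ˢ Finset.univ).erase z₀, G z = 1 - G z₀ := by
          rw [← hsum, ← Finset.add_sum_erase _ _ hz₀mem]; ring
        rw [this]
        linarith

/-- The drift coefficient of the opposite mass. -/
def Dk {n m : ℕ} (u : (Fin n → Bool) → (Fin m → Bool) → ℝ)
    (x : Fin n → Bool) (y : Fin m → Bool)
    (p : Fin n → ℝ) (q : Fin m → ℝ) : Fin n ⊕ Fin m → ℝ :=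
  Sum.elim (fun i => uhatA u p q i (!(x i)) - uhatA u p q i (x i))
    (fun j => uhatB u p q j (y j) - uhatB u p q j (!(y j)))

/-- The equilibrium gap of an index. -/
def gapIdx {n m : ℕ} (u : (Fin n → Bool) → (Fin m → Bool) → ℝ)
    (x : Fin n → Bool) (y : Fin m → Bool) : Fin n ⊕ Fin m → ℝ :=
  Sum.elim (fun i => u x y - u (bflip x i) y) (fun j => u x (bflip y j) - u x y)

lemma mass_deriv {n m : ℕ} {u : (Fin n → Bool) → (Fin m → Bool) → ℝ}
    {p : ℝ → Fin n → ℝ} {q : ℝ → Fin m → ℝ}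
    (hRQ : RQSolution u p q) (x : Fin n → Bool) (y : Fin m → Bool)
    {t : ℝ} (ht : 0 ≤ t) (k : Fin n ⊕ Fin m) :
    HasDerivAt (fun s => oppMass x y (p s) (q s) k)
      (oppMass x y (p t) (q t) k * (1 - oppMass x y (p t) (q t) k)
        * Dk u x y (p t) (q t) k) t := by
  cases k with
  | inl i =>
    have h := hRQ.1 t ht i
    have hval : p t i * (uhatA u (p t) (q t) i false - uhat u (p t) (q t))
        = p t i * (1 - p t i)
          * (uhatA u (p t) (q t) i false - uhatA u (p t) (q t) i true) := by
      rw [uhat_decompA u (p t) (q t) i]; ring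
    rw [hval] at h
    cases hxi : x i
    · -- mass = coord p i true = 1 - p s i
      have h2 : HasDerivAt (fun s => oppMass x y (p s) (q s) (Sum.inl i))
          (0 - (p t i * (1 - p t i)
            * (uhatA u (p t) (q t) i false - uhatA u (p t) (q t) i true))) t := by
        simp only [oppMass, Sum.elim_inl, hxi, Bool.not_false, coord, if_true]
        exact (hasDerivAt_const t (1:ℝ)).sub h
      convert h2 using 1
      simp only [oppMass, Sum.elim_inl, hxi, Bool.not_false, Dk, coord, if_true]
      ring
    · -- mass = coord p i false = p s i
      have h2 : HasDerivAt (fun s => oppMass x y (p s) (q s) (Sum.inl i))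
          (p t i * (1 - p t i)
            * (uhatA u (p t) (q t) i false - uhatA u (p t) (q t) i true)) t := by
        simp only [oppMass, Sum.elim_inl, hxi, Bool.not_true, coord, Bool.false_eq_true, if_false]
        exact h
      convert h2 using 1
      simp only [oppMass, Sum.elim_inl, hxi, Bool.not_true, Dk, coord, Bool.false_eq_true, if_false]
      try ring
  | inr j =>
    have h := hRQ.2 t ht j
    have hval : -(q t j * (uhatB u (p t) (q t) j false - uhat u (p t) (q t)))
        = -(q t j * (1 - q t j)
          * (uhatB u (p t) (q t) j false - uhatB u (p t) (q t) j true)) := by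
      rw [uhat_decompB u (p t) (q t) j]; ring
    rw [hval] at h
    cases hyj : y j
    · have h2 : HasDerivAt (fun s => oppMass x y (p s) (q s) (Sum.inr j))
          (0 - -(q t j * (1 - q t j)
            * (uhatB u (p t) (q t) j false - uhatB u (p t) (q t) j true))) t := by
        simp only [oppMass, Sum.elim_inr, hyj, Bool.not_false, coord, if_true]
        exact (hasDerivAt_const t (1:ℝ)).sub h
      convert h2 using 1
      simp only [oppMass, Sum.elim_inr, hyj, Bool.not_false, Dk, coord, if_true]
      ring
    · have h2 : HasDerivAt (fun s => oppMass x y (p s) (q s) (Sum.inr j))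
          (-(q t j * (1 - q t j)
            * (uhatB u (p t) (q t) j false - uhatB u (p t) (q t) j true))) t := by
        simp only [oppMass, Sum.elim_inr, hyj, Bool.not_true, coord, Bool.false_eq_true, if_false]
        exact h
      convert h2 using 1
      simp only [oppMass, Sum.elim_inr, hyj, Bool.not_true, Dk, coord, Bool.false_eq_true, if_false]
      try ring

lemma Dk_close {n m : ℕ} (u : (Fin n → Bool) → (Fin m → Bool) → ℝ)
    (x : Fin n → Bool) (y : Fin m → Bool)
    {p : Fin n → ℝ} {q : Fin m → ℝ}
    (hp : ∀ i, p i ∈ Set.Ioo (0:ℝ) 1) (hq : ∀ j, q j ∈ Set.Ioo (0:ℝ) 1)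
    {γ : ℝ} (hγ0 : 0 < γ) (hγ1 : γ < 1) (hN : Near γ x y p q)
    {M : ℝ} (hM : ∀ x' y', |u x' y'| ≤ M) (k : Fin n ⊕ Fin m) :
    |Dk u x y p q k + gapIdx u x y k| ≤ 4 * M * (1 - (1-γ)^(n+m)) := by
  cases k with
  | inl i =>
    have h1 := uhatA_close u x y hp hq hγ0 hγ1 hN hM i (!(x i))
    have h2 := uhatA_close u x y hp hq hγ0 hγ1 hN hM i (x i)
    rw [Function.update_eq_self] at h2
    have hb : Function.update x i (!(x i)) = bflip x i := rfl
    rw [hb] at h1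
    simp only [Dk, gapIdx, Sum.elim_inl]
    have : uhatA u p q i (!(x i)) - uhatA u p q i (x i) + (u x y - u (bflip x i) y)
        = (uhatA u p q i (!(x i)) - u (bflip x i) y) - (uhatA u p q i (x i) - u x y) := by
      ring
    rw [this]
    calc |_ - _| ≤ |uhatA u p q i (!(x i)) - u (bflip x i) y|
          + |uhatA u p q i (x i) - u x y| := abs_sub _ _
      _ ≤ 2 * M * (1 - (1-γ)^(n+m)) + 2 * M * (1 - (1-γ)^(n+m)) := add_le_add h1 h2
      _ = 4 * M * (1 - (1-γ)^(n+m)) := by ring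
  | inr j =>
    have h1 := uhatB_close u x y hp hq hγ0 hγ1 hN hM j (y j)
    have h2 := uhatB_close u x y hp hq hγ0 hγ1 hN hM j (!(y j))
    rw [Function.update_eq_self] at h1
    have hb : Function.update y j (!(y j)) = bflip y j := rfl
    rw [hb] at h2
    simp only [Dk, gapIdx, Sum.elim_inr]
    have : uhatB u p q j (y j) - uhatB u p q j (!(y j)) + (u x (bflip y j) - u x y)
        = (uhatB u p q j (y j) - u x y) - (uhatB u p q j (!(y j)) - u x (bflip y j)) := by
      ring
    rw [this]
    calc |_ - _| ≤ |uhatB u p q j (y j) - u x y|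
          + |uhatB u p q j (!(y j)) - u x (bflip y j)| := abs_sub _ _
      _ ≤ 2 * M * (1 - (1-γ)^(n+m)) + 2 * M * (1 - (1-γ)^(n+m)) := add_le_add h1 h2
      _ = 4 * M * (1 - (1-γ)^(n+m)) := by ring

lemma expGron {f f' : ℝ → ℝ} {a t₀ T : ℝ} (hT : t₀ ≤ T)
    (hf : ∀ t ∈ Set.Icc t₀ T, HasDerivAt f (f' t) t)
    (h : ∀ t ∈ Set.Icc t₀ T, f' t ≤ a * f t) :
    f T ≤ f t₀ * Real.exp (a * (T - t₀)) := by
  set g : ℝ → ℝ := fun t => f t * Real.exp (-a * t) with hg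
  have hgd : ∀ t ∈ Set.Icc t₀ T, HasDerivAt g
      (f' t * Real.exp (-a * t) + f t * (Real.exp (-a * t) * (-a))) t := by
    intro t htm
    have he : HasDerivAt (fun s => Real.exp (-a * s)) (Real.exp (-a * t) * (-a)) t := by
      simpa using ((hasDerivAt_id t).const_mul (-a)).exp
    exact (hf t htm).mul he
  have hanti : AntitoneOn g (Set.Icc t₀ T) := by
    apply antitoneOn_of_deriv_nonpos (convex_Icc t₀ T)
    · intro t htm
      exact (hgd t htm).continuousAt.continuousWithinAt
    · intro t htm
      rw [interior_Icc] at htm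
      exact ((hgd t (Set.mem_Icc_of_Ioo htm)).differentiableAt).differentiableWithinAt
    · intro t htm
      rw [interior_Icc] at htm
      rw [(hgd t (Set.mem_Icc_of_Ioo htm)).deriv]
      have := h t (Set.mem_Icc_of_Ioo htm)
      have hexp := Real.exp_pos (-a * t)
      nlinarith
  have hmem₀ : t₀ ∈ Set.Icc t₀ T := Set.left_mem_Icc.mpr hT
  have hmemT : T ∈ Set.Icc t₀ T := Set.right_mem_Icc.mpr hT
  have hgle : g T ≤ g t₀ := hanti hmem₀ hmemT hT
  have hET : (0:ℝ) < Real.exp (-a * T) := Real.exp_pos _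
  rw [hg] at hgle
  simp only at hgle
  have := mul_le_mul_of_nonneg_right hgle (le_of_lt (Real.exp_pos (a * T)))
  calc f T = f T * Real.exp (-a * T) * Real.exp (a * T) := by
        rw [mul_assoc, ← Real.exp_add]; simp
    _ ≤ f t₀ * Real.exp (-a * t₀) * Real.exp (a * T) := this
    _ = f t₀ * Real.exp (a * (T - t₀)) := by
        rw [mul_assoc, ← Real.exp_add]; ring_nf

lemma eqIdx_iff_gap {n m : ℕ} (u : (Fin n → Bool) → (Fin m → Bool) → ℝ)
    (x : Fin n → Bool) (y : Fin m → Bool) (k : Fin n ⊕ Fin m) :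
    eqIdx u x y k ↔ gapIdx u x y k = 0 := by
  cases k with
  | inl i => simp [eqIdx, gapIdx, sub_eq_zero, eq_comm]
  | inr j =>
    simp only [eqIdx, gapIdx, Sum.elim_inr, sub_eq_zero]
    constructor <;> intro h <;> exact h.symm

set_option maxHeartbeats 1000000 in
/-- (Claim 4.4 of the paper.) Let `(x,y)` be a weak pure
Nash equilibrium corner. There is `γ ∈ (0,1/2)` such that along any Red Queen
trajectory with values in `(0,1)^{n+m}`, if at a time `t₀ ≥ 0` the state is
`γ`-near `(x,y)` and `γ_max(t₀) > γ₀(t₀)` (i.e. the maximal opposite-allele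
mass is attained strictly outside the indifferent indices), then at some
finite time `t > t₀` either the state is `γ`-far from `(x,y)` or
`γ_max(t) = γ₀(t)` (the maximum is attained at an indifferent index). -/
theorem stmt14 {n m : ℕ} (hn : 1 ≤ n) (hm : 1 ≤ m)
    (u : (Fin n → Bool) → (Fin m → Bool) → ℝ)
    (x : Fin n → Bool) (y : Fin m → Bool)
    (hweakA : ∀ i, u (bflip x i) y ≤ u x y)
    (hweakB : ∀ j, u x y ≤ u x (bflip y j))
    (hsome : ∃ k : Fin n ⊕ Fin m, eqIdx u x y k) :
    ∃ γ ∈ Set.Ioo (0:ℝ) (1/2),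
      ∀ (p : ℝ → Fin n → ℝ) (q : ℝ → Fin m → ℝ),
        RQSolution u p q → InteriorValues p q →
        ∀ t₀, 0 ≤ t₀ → Near γ x y (p t₀) (q t₀) →
        (∃ k : Fin n ⊕ Fin m, ¬ eqIdx u x y k ∧
          ∀ k', eqIdx u x y k' →
            oppMass x y (p t₀) (q t₀) k' < oppMass x y (p t₀) (q t₀) k) →
        ∃ t > t₀,
          ¬ Near γ x y (p t) (q t) ∨
          (∃ k : Fin n ⊕ Fin m, eqIdx u x y k ∧
            ∀ k', oppMass x y (p t) (q t) k' ≤ oppMass x y (p t) (q t) k) := by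
  classical
  obtain ⟨k₁, hk₁⟩ := hsome
  set M : ℝ := ∑ x' : Fin n → Bool, ∑ y' : Fin m → Bool, |u x' y'| with hMdef
  have hM : ∀ x' y', |u x' y'| ≤ M := by
    intro x' y'
    calc |u x' y'| ≤ ∑ y'' : Fin m → Bool, |u x' y''| :=
          Finset.single_le_sum (f := fun y'' => |u x' y''|)
            (fun _ _ => abs_nonneg _) (Finset.mem_univ y')
      _ ≤ M := Finset.single_le_sum
          (f := fun x'' => ∑ y'' : Fin m → Bool, |u x'' y''|)
          (fun _ _ => Finset.sum_nonneg fun _ _ => abs_nonneg _) (Finset.mem_univ x')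
  have hM0 : 0 ≤ M := le_trans (abs_nonneg _) (hM x y)
  set S : Finset (Fin n ⊕ Fin m) := Finset.univ.filter (fun k => ¬ eqIdx u x y k)
    with hSdef
  by_cases hS : S.Nonempty
  swap
  · -- no strictly non-indifferent index: the hypothesis at `t₀` is contradictory
    refine ⟨1/4, by norm_num, ?_⟩
    intro p q _ _ t₀ _ _ hbad
    obtain ⟨k, hk, -⟩ := hbad
    exact absurd ⟨k, Finset.mem_filter.mpr ⟨Finset.mem_univ k, hk⟩⟩ hS
  · set c : ℝ := S.inf' hS (gapIdx u x y) with hcdef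
    have hgap_nonneg : ∀ k, 0 ≤ gapIdx u x y k := by
      intro k
      cases k with
      | inl i => simpa [gapIdx] using sub_nonneg.mpr (hweakA i)
      | inr j => simpa [gapIdx] using sub_nonneg.mpr (hweakB j)
    have hc : 0 < c := by
      rw [hcdef, Finset.lt_inf'_iff]
      intro k hk
      have hne : ¬ eqIdx u x y k := (Finset.mem_filter.mp hk).2
      rcases lt_or_eq_of_le (hgap_nonneg k) with h | h
      · exact h
      · exact absurd ((eqIdx_iff_gap u x y k).mpr h.symm) hne
    have hcle : ∀ k ∈ S, c ≤ gapIdx u x y k := fun k hk => Finset.inf'_le _ hk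
    set γ : ℝ := min (1/4) (c / (16*M*(n+m) + 1)) with hγdef
    have hden : (0:ℝ) < 16*M*(n+m) + 1 := by positivity
    have hγ0 : 0 < γ := lt_min (by norm_num) (div_pos hc hden)
    have hγquart : γ ≤ 1/4 := min_le_left _ _
    have hγ1 : γ < 1 := lt_of_le_of_lt hγquart (by norm_num)
    refine ⟨γ, ⟨hγ0, lt_of_le_of_lt hγquart (by norm_num)⟩, ?_⟩
    have herr : 4 * M * (1 - (1-γ)^(n+m)) ≤ c/4 := by
      have hb : 1 - (1-γ)^(n+m) ≤ (n+m : ℝ) * γ := by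
        have h1 := one_add_mul_le_pow (a := -γ) (by linarith) (n+m)
        have h2 : (1:ℝ) + (n+m : ℝ) * (-γ) ≤ (1-γ)^(n+m) := by
          have : (1:ℝ) + -γ = 1 - γ := by ring
          rw [← this]
          simpa using h1
        push_cast at h2 ⊢
        linarith
      have hγle : γ ≤ c / (16*M*(n+m) + 1) := min_le_right _ _
      have h2 : γ * (16*M*(n+m)+1) ≤ c := by
        rw [← le_div_iff₀ hden]
        exact hγle
      have h3 : 4 * M * (1 - (1-γ)^(n+m)) ≤ 4 * M * ((n+m : ℝ) * γ) :=
        mul_le_mul_of_nonneg_left hb (by linarith)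
      have hNM : (0:ℝ) ≤ (n+m : ℝ) := by positivity
      have h4 : 4 * M * ((n+m : ℝ) * γ) ≤ c/4 := by nlinarith [mul_nonneg hM0 hNM]
      linarith
    intro p q hRQ hInt t₀ ht₀ hNear₀ _
    by_contra hcon
    have hN' : ∀ t, t₀ ≤ t → Near γ x y (p t) (q t) := by
      intro t ht
      rcases eq_or_lt_of_le ht with h | h
      · rw [← h]; exact hNear₀
      · by_contra hnn; exact hcon ⟨t, h, Or.inl hnn⟩
    have hB' : ∀ t, t₀ < t →
        ¬ (∃ k, eqIdx u x y k ∧ ∀ k',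
            oppMass x y (p t) (q t) k' ≤ oppMass x y (p t) (q t) k) := by
      intro t ht hB; exact hcon ⟨t, ht, Or.inr hB⟩
    -- basic bounds on the masses
    have hmass_pos : ∀ t, 0 ≤ t → ∀ k, 0 < oppMass x y (p t) (q t) k := by
      intro t ht k
      cases k with
      | inl i => simpa [oppMass] using coord_pos (hInt t ht).1 i (!(x i))
      | inr j => simpa [oppMass] using coord_pos (hInt t ht).2 j (!(y j))
    have hmass_lt : ∀ t, t₀ ≤ t → ∀ k, oppMass x y (p t) (q t) k < γ := by
      intro t ht k
      have hN := hN' t ht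
      cases k with
      | inl i =>
        have h1 := hN.1 i
        simp only [oppMass, Sum.elim_inl, coord_not]
        linarith
      | inr j =>
        have h1 := hN.2 j
        simp only [oppMass, Sum.elim_inr, coord_not]
        linarith
    -- drift estimate
    have hDk : ∀ t, t₀ ≤ t → ∀ k,
        |Dk u x y (p t) (q t) k + gapIdx u x y k| ≤ c/4 := by
      intro t ht k
      have h0t : (0:ℝ) ≤ t := le_trans ht₀ ht
      exact le_trans (Dk_close u x y (hInt t h0t).1 (hInt t h0t).2 hγ0 hγ1
        (hN' t ht) hM k) herr
    set α : ℝ := 3*c/8 with hαdef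
    set β : ℝ := c/4 with hβdef
    -- differential inequalities
    have hup : ∀ k ∈ S, ∀ t, t₀ ≤ t →
        oppMass x y (p t) (q t) k * (1 - oppMass x y (p t) (q t) k)
          * Dk u x y (p t) (q t) k ≤ (-α) * oppMass x y (p t) (q t) k := by
      intro k hk t ht
      have hD := hDk t ht k
      have hgk := hcle k hk
      have hm0 : 0 < oppMass x y (p t) (q t) k := hmass_pos t (le_trans ht₀ ht) k
      have hm1 : oppMass x y (p t) (q t) k < γ := hmass_lt t ht k
      have hDle : Dk u x y (p t) (q t) k ≤ -(3*c/4) := by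
        have := abs_le.mp hD
        linarith [this.2]
      set w := oppMass x y (p t) (q t) k
      have hw4 : w < 1/4 := lt_of_lt_of_le hm1 hγquart
      nlinarith [mul_le_mul_of_nonneg_left hDle
          (mul_nonneg hm0.le (by linarith : (0:ℝ) ≤ 1 - w)),
        mul_nonneg (mul_nonneg hc.le hm0.le) (by linarith : (0:ℝ) ≤ 1/2 - w)]
    have hdown : ∀ k, eqIdx u x y k → ∀ t, t₀ ≤ t →
        (-β) * oppMass x y (p t) (q t) k ≤
        oppMass x y (p t) (q t) k * (1 - oppMass x y (p t) (q t) k)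
          * Dk u x y (p t) (q t) k := by
      intro k hk t ht
      have hD := hDk t ht k
      rw [(eqIdx_iff_gap u x y k).mp hk, add_zero] at hD
      have hm0 : 0 < oppMass x y (p t) (q t) k := hmass_pos t (le_trans ht₀ ht) k
      have hm1 : oppMass x y (p t) (q t) k < γ := hmass_lt t ht k
      have hDge : -(c/4) ≤ Dk u x y (p t) (q t) k := (abs_le.mp hD).1
      set w := oppMass x y (p t) (q t) k
      have hw1 : w < 1 := lt_of_lt_of_le (lt_of_lt_of_le hm1 hγquart) (by norm_num)
      nlinarith [mul_le_mul_of_nonneg_left hDge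
          (mul_nonneg hm0.le (by linarith : (0:ℝ) ≤ 1 - w)),
        mul_nonneg (mul_nonneg hc.le hm0.le) hm0.le]
    -- choose the time horizon
    set ε : ℝ := oppMass x y (p t₀) (q t₀) k₁ with hεdef
    have hε : 0 < ε := hmass_pos t₀ ht₀ k₁
    have hαβ : α - β = c/8 := by rw [hαdef, hβdef]; ring
    have hd : (0:ℝ) < α - β := by rw [hαβ]; linarith
    set L : ℝ := Real.log (ε/γ) with hLdef
    set sT : ℝ := |L| / (α - β) + 1 with hsTdef
    have hsT : 0 < sT := by
      have h1 : 0 ≤ |L| / (α - β) := div_nonneg (abs_nonneg L) hd.le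
      rw [hsTdef]
      linarith
    set T : ℝ := t₀ + sT with hTdef
    have hTgt : t₀ < T := by rw [hTdef]; linarith
    have hTge : t₀ ≤ T := hTgt.le
    have hT0 : T - t₀ = sT := by rw [hTdef]; ring
    have hlt : Real.exp (-(α-β) * sT) < ε/γ := by
      rw [← Real.exp_log (div_pos hε hγ0)]
      apply Real.exp_lt_exp.mpr
      have he : -(α-β) * sT = -|L| - (α-β) := by
        rw [hsTdef]
        field_simp
        ring
      rw [he, ← hLdef]
      have := neg_abs_le L
      linarith
    have key : γ * Real.exp (-α * sT) < ε * Real.exp (-β * sT) := by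
      have e1 : Real.exp (-α * sT) = Real.exp (-(α-β) * sT) * Real.exp (-β * sT) := by
        rw [← Real.exp_add]; ring_nf
      rw [e1]
      have h2 : γ * Real.exp (-(α-β)*sT) < ε := by
        calc γ * Real.exp (-(α-β)*sT) < γ * (ε/γ) :=
              mul_lt_mul_of_pos_left hlt hγ0
          _ = ε := by field_simp
      calc γ * (Real.exp (-(α-β)*sT) * Real.exp (-β*sT))
          = (γ * Real.exp (-(α-β)*sT)) * Real.exp (-β*sT) := by ring
        _ < ε * Real.exp (-β*sT) := mul_lt_mul_of_pos_right h2 (Real.exp_pos _)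
    -- Gronwall estimates
    have hupper : ∀ k ∈ S, oppMass x y (p T) (q T) k < ε * Real.exp (-β * sT) := by
      intro k hk
      have hG := expGron (f := fun s => oppMass x y (p s) (q s) k)
        (f' := fun s => oppMass x y (p s) (q s) k * (1 - oppMass x y (p s) (q s) k)
          * Dk u x y (p s) (q s) k) (a := -α) hTge
        (fun t htm => mass_deriv hRQ x y (le_trans ht₀ htm.1) k)
        (fun t htm => hup k hk t htm.1)
      have hmlt : oppMass x y (p t₀) (q t₀) k < γ := hmass_lt t₀ le_rfl k
      have hexp : (0:ℝ) < Real.exp (-α * (T - t₀)) := Real.exp_pos _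
      calc oppMass x y (p T) (q T) k
          ≤ oppMass x y (p t₀) (q t₀) k * Real.exp (-α * (T - t₀)) := hG
        _ < γ * Real.exp (-α * (T - t₀)) := mul_lt_mul_of_pos_right hmlt hexp
        _ = γ * Real.exp (-α * sT) := by rw [hT0]
        _ < ε * Real.exp (-β * sT) := key
    have hlower : ε * Real.exp (-β * sT) ≤ oppMass x y (p T) (q T) k₁ := by
      have hG := expGron (f := fun s => -(oppMass x y (p s) (q s) k₁))
        (f' := fun s => -(oppMass x y (p s) (q s) k₁
          * (1 - oppMass x y (p s) (q s) k₁) * Dk u x y (p s) (q s) k₁))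
        (a := -β) hTge
        (fun t htm => (mass_deriv hRQ x y (le_trans ht₀ htm.1) k₁).neg)
        (fun t htm => by
          have := hdown k₁ hk₁ t htm.1
          linarith)
      rw [hT0] at hG
      have : ε * Real.exp (-β * sT) ≤ oppMass x y (p T) (q T) k₁ := by
        rw [hεdef]
        nlinarith [Real.exp_pos (-β * sT)]
      exact this
    -- contradiction at time T
    apply hB' T hTgt
    set E : Finset (Fin n ⊕ Fin m) := Finset.univ.filter (eqIdx u x y) with hEdef
    have hk₁E : k₁ ∈ E := Finset.mem_filter.mpr ⟨Finset.mem_univ k₁, hk₁⟩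
    obtain ⟨kstar, hkstarE, hkstarmax⟩ :=
      Finset.exists_max_image E (fun k => oppMass x y (p T) (q T) k) ⟨k₁, hk₁E⟩
    refine ⟨kstar, (Finset.mem_filter.mp hkstarE).2, ?_⟩
    intro k'
    by_cases hk' : eqIdx u x y k'
    · exact hkstarmax k' (Finset.mem_filter.mpr ⟨Finset.mem_univ k', hk'⟩)
    · have hk'S : k' ∈ S := Finset.mem_filter.mpr ⟨Finset.mem_univ k', hk'⟩
      have h1 := hupper k' hk'S
      have h2 := hlower
      have h3 := hkstarmax k₁ hk₁E
      linarith
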